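/- Let G be a finite simple graph with vertex set V and let v ∈ V be a fixed (identity) vertex. Define recursively h : ℕ → V → (ℕ → ℕ) by h^0_u[j] = 0 for all u and j, and for k ≥ 0: h^{k+1}_u[1] = Σ_{w ∈ N(u)} 𝟙[w = v], and h^{k+1}_u[j] = Σ_{w ∈ N(u)} h^k_w[j−1] for j ≥ 2. Then for every K ≥ 1 and every j with 1 ≤ j ≤ K, the value h^K_v[j] equals the number of closed walks of length j at v in G (i.e., walks of length j that start and end at v). -/

import Mathlib

open Finset

/-- The recursively defined ID-GNN embedding with identity coloring at `v`:
`h^0_u[j] = 0`, `h^{k+1}_u[1] = Σ_{w ∈ N(u)} 𝟙[w = v]`, and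
`h^{k+1}_u[j] = Σ_{w ∈ N(u)} h^k_w[j-1]` for `j ≥ 2`. -/
def idgnnEmbed {V : Type*} [Fintype V] [DecidableEq V]
    (G : SimpleGraph V) [DecidableRel G.Adj] (v : V) : ℕ → V → ℕ → ℕ
  | 0, _, _ => 0
  | k + 1, u, j =>
    match j with
    | 0 => 0
    | 1 => ∑ w ∈ G.neighborFinset u, if w = v then 1 else 0
    | j' + 2 => ∑ w ∈ G.neighborFinset u, idgnnEmbed G v k w (j' + 1)

/-! Both the embedding and the powers of the adjacency matrix `A` obey the recursion
`x_{j+1}(u) = Σ_{w ∈ N(u)} x_j(w)`, starting from the indicator of `v` (the column of `A⁰ = 1`).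
Each layer advances this recursion by one step, so after `k` layers the coordinates `j ≤ k`
agree with `(A ^ j) u v`, which counts the walks of length `j` from `u` to `v`. -/

namespace idgnnEmbed

variable {V : Type*} [Fintype V] [DecidableEq V] (G : SimpleGraph V) [DecidableRel G.Adj]
  (v : V)

theorem succ_one (k : ℕ) (u : V) :
    idgnnEmbed G v (k + 1) u 1 = ∑ w ∈ G.neighborFinset u, if w = v then 1 else 0 :=
  rfl

theorem succ_add_two (k j : ℕ) (u : V) :
    idgnnEmbed G v (k + 1) u (j + 2) = ∑ w ∈ G.neighborFinset u, idgnnEmbed G v k w (j + 1) :=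
  rfl

theorem eq_adjMatrix_pow_apply {j k : ℕ} (hjk : j < k) (u : V) :
    idgnnEmbed G v k u (j + 1) = (G.adjMatrix ℕ ^ (j + 1)) u v := by
  obtain ⟨k, rfl⟩ : ∃ k', k = k' + 1 := ⟨k - 1, by omega⟩
  induction j generalizing k u with
  | zero =>
    rw [zero_add, succ_one, pow_one, ← mul_one (G.adjMatrix ℕ), SimpleGraph.adjMatrix_mul_apply]
    simp only [Matrix.one_apply]
  | succ j ih =>
    rw [succ_add_two, pow_succ', SimpleGraph.adjMatrix_mul_apply]
    refine sum_congr rfl fun w _ => ?_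
    obtain ⟨k, rfl⟩ : ∃ k', k = k' + 1 := ⟨k - 1, by omega⟩
    exact ih w k (by omega)

end idgnnEmbed

/-- Proposition 2. For every `K ≥ 1` and every `j` with `1 ≤ j ≤ K`, the
value `h^K_v[j]` of the recursively defined ID-GNN embedding at the identity vertex `v`
equals the number of closed walks of length `j` at `v` in `G`, i.e. walks of length `j`
that start and end at `v`. -/
theorem idgnnEmbed_counts_closed_walks
    {V : Type*} [Fintype V] [DecidableEq V]
    (G : SimpleGraph V) [DecidableRel G.Adj] (v : V) :
    ∀ K : ℕ, 1 ≤ K → ∀ j : ℕ, 1 ≤ j → j ≤ K →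
      idgnnEmbed G v K v j = Fintype.card {p : G.Walk v v // p.length = j} := by
  intro K _ j hj hjK
  obtain ⟨i, rfl⟩ : ∃ i, j = i + 1 := ⟨j - 1, by omega⟩
  rw [idgnnEmbed.eq_adjMatrix_pow_apply G v (by omega), G.adjMatrix_pow_apply_eq_card_walk]
  rfl
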